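/- Let s = 2 and let Y be an admissible partition of C². There exists a map M from the set of nonempty finite chains in K_Y to K_Y such that: (i) M is order-reversing, i.e. if a chain σ' is a subchain of a chain σ then M(σ) ≤ M(σ'); (ii) for every chain σ : A_t < A_{t-1} < ⋯ < A₀ in K_Y one has A_t ≤ M(σ); and (iii) M(σ) involves at most 2 elements of Y if t = 0, and at most 4t elements of Y if t ≥ 1. -/

import Mathlib

/-!
Model boxes by their sets of points in `(ℕ → Bool)²`. For a proper contraction `A` of `Y`
choose a deepest pair of sibling boxes of `Y` whose parent lies in a box of `A`. Given a chain
`σ`, `M(σ)` merges, for each `A ∈ σ`, the parent of its pair or, when that pair shares a box with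
the pair of another element of `σ` of the other colour, the quad spanned by the two pairs.
Depth-maximality forces the fourth box of such a quad into `Y` (a pair inside it would be
deeper). Hence every merged box is a union of boxes of `Y`, two merged boxes are equal or
disjoint, and `M(σ)` is a partition lying between the least element of `σ` and `Y`; shrinking
`σ` can only replace quads by their halves. A quad involves four boxes of `Y` but serves at least
two elements of `σ`, so at most `2|σ|` boxes of `Y` are involved. Comparisons of partitions
reduce to refinement of point sets because in dimension two every partition of a box into
dyadic boxes has a guillotine cut.
-/

namespace BrinThompson

/-- A finite binary word. -/
abbrev Word : Type := List Bool

/-- A box in `C^s`, recorded as the tuple of binary words whose cylinders form the product. -/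
abbrev Box (s : ℕ) : Type := Fin s → Word

/-- The box obtained from `b` by replacing its `i`-th word `u` by `u ++ [bit]`. -/
def expandBox {s : ℕ} (i : Fin s) (bit : Bool) (b : Box s) : Box s :=
  Function.update b i (b i ++ [bit])

/-- `B` is obtained from `A` by a simple expansion of colour `i`: one box of `A` is replaced by
its two halves in direction `i`. -/
def SimpleExpansionC {s : ℕ} (i : Fin s) (A B : Finset (Box s)) : Prop :=
  ∃ b ∈ A, B = insert (expandBox i false b) (insert (expandBox i true b) (A.erase b))

/-- `B` is obtained from `A` by a simple expansion of some colour. -/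
def SimpleExpansion {s : ℕ} (A B : Finset (Box s)) : Prop :=
  ∃ i : Fin s, SimpleExpansionC i A B

/-- `Expands A B` (`A ≤ B`): `B` is a descendant of `A`, i.e. `B` is obtained from `A` by
finitely many simple expansions. -/
def Expands {s : ℕ} (A B : Finset (Box s)) : Prop :=
  Relation.ReflTransGen SimpleExpansion A B

/-- The one-element partition `{C^s}`. -/
def trivialPartition (s : ℕ) : Finset (Box s) := {fun _ => []}

/-- An admissible partition of `C^s`. -/
def Admissible {s : ℕ} (A : Finset (Box s)) : Prop :=
  Expands (trivialPartition s) A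

/-- `M = glb_A(Ω)`: the greatest lower bound of `Ω` above `A`. -/
def IsGlbAbove {s : ℕ} (A : Finset (Box s)) (Ω : Set (Finset (Box s)))
    (M : Finset (Box s)) : Prop :=
  Admissible M ∧ Expands A M ∧ (∀ B ∈ Ω, Expands M B) ∧
    ∀ N : Finset (Box s), Admissible N → Expands A N → (∀ B ∈ Ω, Expands N B) → Expands N M

/-- The depth of a box: the total length of its defining words. -/
def depth {s : ℕ} (b : Box s) : ℕ := ∑ i, (b i).length

/-- `BoxLE m b`: the box `m` contains the box `b`, i.e. each word of `m` is a prefix of the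
corresponding word of `b`. -/
def BoxLE {s : ℕ} (m b : Box s) : Prop := ∀ i, m i <+: b i

/-- A box `y ∈ Y` is locally maximal with respect to `A`: for the box `m` of `A` containing `y`,
every box `j ∈ Y` contained in `m` satisfies `l(A,j) ≤ l(A,y)`, i.e. `depth j ≤ depth y`. -/
def LocallyMaximal {s : ℕ} (A Y : Finset (Box s)) (y : Box s) : Prop :=
  ∀ m ∈ A, BoxLE m y → ∀ j ∈ Y, BoxLE m j → depth j ≤ depth y

/-- There is an edge of colour `i` between `y, y' ∈ Y` in the graph `Γ_A`: some simple
contraction `Z` of `Y` of colour `i` with `A ≤ Z` merges exactly `y` and `y'`. -/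
def GammaAdjC {s : ℕ} (A Y : Finset (Box s)) (i : Fin s) (y y' : Box s) : Prop :=
  y ≠ y' ∧ y ∈ Y ∧ y' ∈ Y ∧
    ∃ Z : Finset (Box s), Admissible Z ∧ SimpleExpansionC i Z Y ∧ Expands A Z ∧
      Y \ Z = {y, y'}

/-- The graph `Γ_A` (with its colours forgotten). -/
def Gamma {s : ℕ} (A Y : Finset (Box s)) : SimpleGraph (Box s) where
  Adj y y' := ∃ i : Fin s, GammaAdjC A Y i y y'
  symm := by
    constructor
    rintro y y' ⟨i, hne, hy, hy', Z, h1, h2, h3, h4⟩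
    exact ⟨i, hne.symm, hy', hy, Z, h1, h2, h3, by rwa [Finset.pair_comm]⟩
  loopless := by constructor; rintro y ⟨i, hne, _⟩; exact hne rfl

/-- The geometric realization of the order complex (nerve) of the relation `le` on `P`:
finitely supported probability densities on `P` whose support is a chain, topologised as a
subspace of `P → ℝ`. -/
abbrev OrderComplex (P : Type*) (le : P → P → Prop) : Type _ :=
  {f : P → ℝ // (Function.support f).Finite ∧ (∀ x, 0 ≤ f x) ∧
    IsChain le (Function.support f) ∧ ∑ᶠ x, f x = 1}

/-- A space is `t`-connected if it is nonempty, path-connected and its homotopy groups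
`π_k` vanish for `1 ≤ k ≤ t`. -/
def TConnected (t : ℕ) (X : Type*) [TopologicalSpace X] : Prop :=
  Nonempty X ∧ PathConnectedSpace X ∧
    ∀ k : ℕ, 1 ≤ k → k ≤ t → ∀ x : X, Subsingleton (HomotopyGroup (Fin k) X x)


def cylinder (u : Word) : Set (ℕ → Bool) := {x | ∀ k (hk : k < u.length), u[k] = x k}

lemma cylinder_anti {u v : Word} (h : u <+: v) : cylinder v ⊆ cylinder u :=
  fun _ hx k hk => (h.getElem hk).trans (hx k (hk.trans_le h.length_le))

lemma getD_mem_cylinder (u : Word) : (fun k => u.getD k false) ∈ cylinder u :=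
  fun _ hk => (List.getD_eq_getElem _ _ hk).symm

lemma cylinder_append_singleton (u : Word) (a : Bool) :
    cylinder (u ++ [a]) = cylinder u ∩ {x | x u.length = a} := by
  ext x
  simp only [cylinder, Set.mem_inter_iff, Set.mem_ofPred_eq, List.length_append,
    List.length_singleton]
  refine ⟨fun hx => ⟨fun k hk => ?_, ?_⟩, fun ⟨hx, hxa⟩ k hk => ?_⟩
  · rw [← hx k (by omega), List.getElem_append_left hk]
  · rw [← hx u.length (by omega)]
    simp
  · rcases Nat.lt_succ_iff_lt_or_eq.mp hk with hk | rfl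
    · rw [List.getElem_append_left hk, hx k hk]
    · simp [hxa]

lemma prefix_or_prefix_of_mem_cylinder {u v : Word} {x : ℕ → Bool} (hu : x ∈ cylinder u)
    (hv : x ∈ cylinder v) : u <+: v ∨ v <+: u := by
  have key {u v : Word} (hu : x ∈ cylinder u) (hv : x ∈ cylinder v) (hle : u.length ≤ v.length) :
      u <+: v := by
    rw [List.prefix_iff_eq_take]
    refine List.ext_getElem (by simp [hle]) fun k hk hk' => ?_
    rw [List.getElem_take, hu k hk, hv k (by omega)]
  rcases le_total u.length v.length with h | h
  exacts [.inl (key hu hv h), .inr (key hv hu h)]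

lemma cylinder_inter_nonempty_iff {u v : Word} :
    (cylinder u ∩ cylinder v).Nonempty ↔ u <+: v ∨ v <+: u := by
  refine ⟨fun ⟨x, hu, hv⟩ => prefix_or_prefix_of_mem_cylinder hu hv, ?_⟩
  rintro (h | h)
  · exact ⟨_, cylinder_anti h (getD_mem_cylinder v), getD_mem_cylinder v⟩
  · exact ⟨_, getD_mem_cylinder u, cylinder_anti h (getD_mem_cylinder u)⟩

variable {s : ℕ}

def boxSet (b : Box s) : Set (Fin s → ℕ → Bool) := Set.univ.pi fun i => cylinder (b i)

lemma boxSet_nonempty (b : Box s) : (boxSet b).Nonempty :=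
  ⟨fun i k => (b i).getD k false, fun i _ => getD_mem_cylinder (b i)⟩

lemma boxSet_anti {m b : Box s} (h : BoxLE m b) : boxSet b ⊆ boxSet m :=
  Set.pi_mono fun i _ => cylinder_anti (h i)

lemma boxSet_inter_nonempty_iff {b c : Box s} :
    (boxSet b ∩ boxSet c).Nonempty ↔ ∀ i, b i <+: c i ∨ c i <+: b i := by
  simp only [boxSet, ← Set.pi_inter_distrib, Set.pi_nonempty_iff, Set.mem_univ, true_implies,
    ← cylinder_inter_nonempty_iff]
  rfl

lemma BoxLE.refl (b : Box s) : BoxLE b b := fun _ => List.prefix_rfl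

lemma BoxLE.trans {a b c : Box s} (h₁ : BoxLE a b) (h₂ : BoxLE b c) : BoxLE a c :=
  fun i => (h₁ i).trans (h₂ i)

lemma boxSet_inter_nonempty_of_boxLE {a b c : Box s} (ha : BoxLE a c) (hb : BoxLE b c) :
    (boxSet a ∩ boxSet b).Nonempty :=
  (boxSet_nonempty c).mono (Set.subset_inter (boxSet_anti ha) (boxSet_anti hb))

lemma expandBox_apply_self (i : Fin s) (a : Bool) (b : Box s) :
    expandBox i a b i = b i ++ [a] := by
  simp [expandBox]

lemma expandBox_apply_of_ne {i j : Fin s} (h : j ≠ i) (a : Bool) (b : Box s) :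
    expandBox i a b j = b j := by
  simp [expandBox, h]

lemma boxLE_expandBox (i : Fin s) (a : Bool) (b : Box s) : BoxLE b (expandBox i a b) := by
  intro j
  rcases eq_or_ne j i with rfl | hj
  · rw [expandBox_apply_self]
    exact List.prefix_append _ _
  · rw [expandBox_apply_of_ne hj]

lemma expandBox_injective {i : Fin s} {a a' : Bool} {b b' : Box s}
    (h : expandBox i a b = expandBox i a' b') : b = b' ∧ a = a' := by
  have hi := congrFun h i
  rw [expandBox_apply_self, expandBox_apply_self] at hi
  obtain ⟨hbi, ha⟩ := List.append_inj' hi rfl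
  refine ⟨funext fun j => ?_, List.singleton_inj.mp ha⟩
  rcases eq_or_ne j i with rfl | hj
  · exact hbi
  · simpa [expandBox_apply_of_ne hj] using congrFun h j

lemma expandBox_comm {i j : Fin s} (h : i ≠ j) (a b : Bool) (c : Box s) :
    expandBox i a (expandBox j b c) = expandBox j b (expandBox i a c) := by
  unfold expandBox
  rw [Function.update_of_ne h, Function.update_of_ne h.symm]
  exact (Function.update_comm h _ _ _).symm

lemma boxSet_expandBox (i : Fin s) (a : Bool) (b : Box s) :
    boxSet (expandBox i a b) = boxSet b ∩ {x | x i (b i).length = a} := by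
  ext x
  simp only [boxSet, Set.mem_pi, Set.mem_univ, true_implies, Set.mem_inter_iff,
    Set.mem_ofPred_eq]
  refine ⟨fun hx => ⟨fun j => cylinder_anti (boxLE_expandBox i a b j) (hx j), ?_⟩,
    fun ⟨hx, hxa⟩ j => ?_⟩
  · have hxi := hx i
    rw [expandBox_apply_self, cylinder_append_singleton] at hxi
    exact hxi.2
  · rcases eq_or_ne j i with rfl | hj
    · rw [expandBox_apply_self, cylinder_append_singleton]
      exact ⟨hx j, hxa⟩
    · rw [expandBox_apply_of_ne hj]
      exact hx j

lemma boxSet_eq_union_expandBox (i : Fin s) (b : Box s) :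
    boxSet b = boxSet (expandBox i false b) ∪ boxSet (expandBox i true b) := by
  ext x
  rw [Set.mem_union, boxSet_expandBox, boxSet_expandBox]
  rcases Bool.eq_false_or_eq_true (x i (b i).length) with h | h <;> simp [h]

lemma disjoint_boxSet_expandBox (i : Fin s) (b : Box s) {a a' : Bool} (h : a ≠ a') :
    Disjoint (boxSet (expandBox i a b)) (boxSet (expandBox i a' b)) := by
  rw [boxSet_expandBox, boxSet_expandBox, Set.disjoint_left]
  rintro x ⟨-, hx⟩ ⟨-, hx'⟩
  exact h (hx.symm.trans hx')

lemma depth_expandBox (i : Fin s) (a : Bool) (b : Box s) :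
    depth (expandBox i a b) = depth b + 1 := by
  have h : ∀ j, (expandBox i a b j).length = (b j).length + if j = i then 1 else 0 := by
    intro j
    rcases eq_or_ne j i with rfl | hj
    · simp [expandBox_apply_self]
    · simp [expandBox_apply_of_ne hj, hj]
  simp [depth, h, Finset.sum_add_distrib]

lemma depth_le_of_boxLE {m b : Box s} (h : BoxLE m b) : depth m ≤ depth b :=
  Finset.sum_le_sum fun i _ => (h i).length_le

instance (m b : Box s) : Decidable (BoxLE m b) := inferInstanceAs (Decidable (∀ i, m i <+: b i))

structure IsPartition (X : Finset (Box s)) (S : Set (Fin s → ℕ → Bool)) : Prop where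
  biUnion_eq : ⋃ b ∈ X, boxSet b = S
  pairwiseDisjoint : (X : Set (Box s)).PairwiseDisjoint boxSet

namespace IsPartition

variable {X : Finset (Box s)} {S : Set (Fin s → ℕ → Bool)}

lemma subset (h : IsPartition X S) {b : Box s} (hb : b ∈ X) : boxSet b ⊆ S :=
  h.biUnion_eq ▸ Set.subset_biUnion_of_mem (u := boxSet) (Finset.mem_coe.2 hb)

lemma exists_mem (h : IsPartition X S) {x : Fin s → ℕ → Bool} (hx : x ∈ S) :
    ∃ b ∈ X, x ∈ boxSet b := by
  rw [← h.biUnion_eq] at hx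
  simpa using hx

lemma eq_of_inter_nonempty (h : IsPartition X S) {b c : Box s} (hb : b ∈ X) (hc : c ∈ X)
    (hbc : (boxSet b ∩ boxSet c).Nonempty) : b = c :=
  h.pairwiseDisjoint.elim hb hc (Set.not_disjoint_iff_nonempty_inter.2 hbc)

lemma filter (h : IsPartition X S) (p : Box s → Prop) [DecidablePred p]
    (T : Set (Fin s → ℕ → Bool)) (hp : ∀ b ∈ X, p b → boxSet b ⊆ T)
    (hnp : ∀ b ∈ X, ¬ p b → Disjoint (boxSet b) T) : IsPartition (X.filter p) (S ∩ T) := by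
  refine ⟨Set.Subset.antisymm ?_ fun x ⟨hxS, hxT⟩ => ?_,
    h.pairwiseDisjoint.subset (Finset.coe_subset.2 (X.filter_subset p))⟩
  · simp only [Finset.mem_filter, Set.iUnion_subset_iff, and_imp]
    exact fun b hb hpb => Set.subset_inter (h.subset hb) (hp b hb hpb)
  · obtain ⟨b, hb, hxb⟩ := h.exists_mem hxS
    have hpb : p b := by_contra fun hpb => Set.disjoint_left.1 (hnp b hb hpb) hxb hxT
    exact Set.mem_biUnion (Finset.mem_coe.2 (Finset.mem_filter.2 ⟨hb, hpb⟩)) hxb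

lemma disjoint_of_not_boxLE (hX : IsPartition X S) {x x' z : Box s} (hx : x ∈ X) (hx' : x' ∈ X)
    (hz : BoxLE x' z) (h : ¬ BoxLE x z) : Disjoint (boxSet z) (boxSet x) :=
  (hX.pairwiseDisjoint hx' hx fun hxx => h (hxx ▸ hz)).mono_left (boxSet_anti hz)

end IsPartition

lemma isPartition_trivialPartition : IsPartition (trivialPartition s) Set.univ := by
  refine ⟨?_, by simp [trivialPartition]⟩
  simp [trivialPartition, boxSet, cylinder]

variable {A B : Finset (Box s)}

lemma biUnion_boxSet_of_simpleExpansion (h : SimpleExpansion A B) :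
    ⋃ b ∈ B, boxSet b = ⋃ a ∈ A, boxSet a := by
  obtain ⟨i, b, hb, rfl⟩ := h
  conv_rhs => rw [← Finset.insert_erase hb]
  simp only [Finset.set_biUnion_insert, boxSet_eq_union_expandBox i b, Set.union_assoc]

lemma IsPartition.of_simpleExpansion {S : Set (Fin s → ℕ → Bool)} (hA : IsPartition A S)
    (h : SimpleExpansion A B) : IsPartition B S := by
  refine ⟨(biUnion_boxSet_of_simpleExpansion h).trans hA.biUnion_eq, ?_⟩
  obtain ⟨i, b, hb, rfl⟩ := h
  have hrest : ∀ a, ∀ c ∈ (A.erase b : Set (Box s)), expandBox i a b ≠ c →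
      Disjoint (boxSet (expandBox i a b)) (boxSet c) := fun a c hc _ =>
    (hA.pairwiseDisjoint hb (Finset.mem_of_mem_erase hc)
      (Finset.ne_of_mem_erase hc).symm).mono_left (boxSet_anti (boxLE_expandBox i a b))
  simp only [Finset.coe_insert]
  refine ((hA.pairwiseDisjoint.subset (by simp)).insert (hrest true)).insert fun c hc hne => ?_
  rcases hc with rfl | hc
  · exact disjoint_boxSet_expandBox i b Bool.false_ne_true
  · exact hrest false c hc hne

lemma Expands.biUnion_boxSet_eq (h : Expands A B) : ⋃ b ∈ B, boxSet b = ⋃ a ∈ A, boxSet a := by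
  induction h with
  | refl => rfl
  | tail _ hCB ih => exact (biUnion_boxSet_of_simpleExpansion hCB).trans ih

lemma IsPartition.of_expands {S : Set (Fin s → ℕ → Bool)} (hA : IsPartition A S)
    (h : Expands A B) : IsPartition B S := by
  induction h with
  | refl => exact hA
  | tail _ hCB ih => exact ih.of_simpleExpansion hCB

lemma Admissible.isPartition (h : Admissible A) : IsPartition A Set.univ :=
  isPartition_trivialPartition.of_expands h

lemma Expands.exists_boxLE (h : Expands A B) {b : Box s} (hb : b ∈ B) : ∃ a ∈ A, BoxLE a b := by
  induction h generalizing b with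
  | refl => exact ⟨b, hb, BoxLE.refl b⟩
  | tail _ hCD ih =>
    obtain ⟨i, c, hc, rfl⟩ := hCD
    obtain ⟨a, ha, hac⟩ := ih hc
    simp only [Finset.mem_insert, Finset.mem_erase] at hb
    rcases hb with rfl | rfl | ⟨-, hb⟩
    · exact ⟨a, ha, hac.trans (boxLE_expandBox _ _ _)⟩
    · exact ⟨a, ha, hac.trans (boxLE_expandBox _ _ _)⟩
    · exact ih hb

lemma Expands.union_right {T : Finset (Box s)} (h : Expands A B)
    (hT : Disjoint (⋃ a ∈ A, boxSet a) (⋃ t ∈ T, boxSet t)) : Expands (A ∪ T) (B ∪ T) := by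
  induction h with
  | refl => exact .refl
  | @tail C D hAC hCD ih =>
    refine ih.tail ?_
    obtain ⟨i, b, hb, rfl⟩ := hCD
    have hbT : b ∉ T := fun hbT => by
      obtain ⟨x, hx⟩ := boxSet_nonempty b
      refine Set.disjoint_left.1 hT ?_ (Set.mem_biUnion (Finset.mem_coe.2 hbT) hx)
      rw [← Expands.biUnion_boxSet_eq hAC]
      exact Set.mem_biUnion (Finset.mem_coe.2 hb) hx
    refine ⟨i, b, Finset.mem_union_left _ hb, ?_⟩
    rw [Finset.erase_union_distrib, Finset.erase_eq_of_notMem hbT, Finset.insert_union,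
      Finset.insert_union]

lemma Expands.union {A' B' : Finset (Box s)} (h : Expands A B) (h' : Expands A' B')
    (hd : Disjoint (⋃ a ∈ A, boxSet a) (⋃ a ∈ A', boxSet a)) : Expands (A ∪ A') (B ∪ B') := by
  refine (h.union_right hd).trans ?_
  rw [Finset.union_comm B A', Finset.union_comm B B']
  exact h'.union_right (h.biUnion_boxSet_eq ▸ hd.symm)

lemma Expands.exists_expandBox_mem (h : Expands A B) (hne : A ≠ B) :
    ∃ p i, expandBox i false p ∈ B ∧ expandBox i true p ∈ B ∧ ∃ a ∈ A, BoxLE a p := by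
  rcases h.cases_tail with rfl | ⟨C, hAC, i, p, hp, rfl⟩
  · exact absurd rfl hne
  · exact ⟨p, i, Finset.mem_insert_self _ _,
      Finset.mem_insert_of_mem (Finset.mem_insert_self _ _), Expands.exists_boxLE hAC hp⟩

lemma exists_boxLE_expandBox {c b : Box s} {i : Fin s} (h : BoxLE c b)
    (hlt : (c i).length < (b i).length) : ∃ a, BoxLE (expandBox i a c) b := by
  obtain ⟨t, ht⟩ := h i
  obtain ⟨x, t, rfl⟩ := List.exists_cons_of_ne_nil (l := t) <| by
    rintro rfl
    simp [← ht] at hlt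
  refine ⟨x, fun j => ?_⟩
  rcases eq_or_ne j i with rfl | hj
  · rw [expandBox_apply_self, ← ht]
    exact ⟨t, by simp⟩
  · rw [expandBox_apply_of_ne hj]
    exact h j

lemma exists_lt_length_of_isPartition {X : Finset (Box 2)} {c : Box 2}
    (hX : IsPartition X (boxSet c)) (hc : ∀ b ∈ X, BoxLE c b) (hcX : c ∉ X) :
    ∃ i, ∀ b ∈ X, (c i).length < (b i).length := by
  by_contra! hcon
  have hfull (i : Fin 2) : ∃ b ∈ X, b i = c i := by
    obtain ⟨b, hb, hle⟩ := hcon i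
    exact ⟨b, hb, ((hc b hb i).eq_of_length (le_antisymm (hc b hb i).length_le hle)).symm⟩
  obtain ⟨b₀, hb₀, e₀⟩ := hfull 0
  obtain ⟨b₁, hb₁, e₁⟩ := hfull 1
  -- in dimension two, a box of full width meets a box of full height
  obtain rfl : b₀ = b₁ := hX.eq_of_inter_nonempty hb₀ hb₁ <| boxSet_inter_nonempty_iff.2 <|
    Fin.forall_fin_two.2 ⟨.inl (e₀ ▸ hc b₁ hb₁ 0), .inr (e₁ ▸ hc b₀ hb₀ 1)⟩
  exact hcX (funext (Fin.forall_fin_two.2 ⟨e₀, e₁⟩) ▸ hb₀)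

section Halves

variable {X : Finset (Box s)} {c : Box s} {i : Fin s}

lemma IsPartition.filter_expandBox (hX : IsPartition X (boxSet c)) (hc : ∀ b ∈ X, BoxLE c b)
    (hi : ∀ b ∈ X, (c i).length < (b i).length) (a : Bool) :
    IsPartition (X.filter (BoxLE (expandBox i a c))) (boxSet (expandBox i a c)) := by
  have h := hX.filter (BoxLE (expandBox i a c)) (boxSet (expandBox i a c))
    (fun b _ hb => boxSet_anti hb) fun b hb hnb => ?_
  · rwa [Set.inter_eq_right.2 (boxSet_anti (boxLE_expandBox i a c))] at h
  obtain ⟨a', ha'⟩ := exists_boxLE_expandBox (hc b hb) (hi b hb)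
  exact (disjoint_boxSet_expandBox i c fun h => hnb (by rwa [← h])).mono_left (boxSet_anti ha')

lemma card_filter_expandBox_lt (hX : IsPartition X (boxSet c)) (hc : ∀ b ∈ X, BoxLE c b)
    (hi : ∀ b ∈ X, (c i).length < (b i).length) (a : Bool) :
    (X.filter (BoxLE (expandBox i a c))).card < X.card := by
  refine Finset.card_lt_card (Finset.filter_ssubset.2 ?_)
  obtain ⟨x, hx⟩ := boxSet_nonempty (expandBox i (!a) c)
  obtain ⟨b, hb, hxb⟩ := (hX.filter_expandBox hc hi (!a)).exists_mem hx
  rw [Finset.mem_filter] at hb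
  refine ⟨b, hb.1, fun hab => ?_⟩
  exact Set.disjoint_left.1 (disjoint_boxSet_expandBox i c (Bool.not_ne_self a).symm)
    (boxSet_anti hab hxb) hx

end Halves

theorem expands_singleton_of_isPartition {X : Finset (Box 2)} {c : Box 2}
    (hX : IsPartition X (boxSet c)) (hc : ∀ b ∈ X, BoxLE c b) : Expands {c} X := by
  induction hn : X.card using Nat.strong_induction_on generalizing X c with
  | _ n ih =>
  by_cases hcX : c ∈ X
  · obtain rfl : X = {c} := Finset.eq_singleton_iff_unique_mem.2 ⟨hcX, fun b hb =>
      hX.eq_of_inter_nonempty hb hcX (boxSet_inter_nonempty_of_boxLE (BoxLE.refl b) (hc b hb))⟩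
    exact .refl
  obtain ⟨i, hi⟩ := exists_lt_length_of_isPartition hX hc hcX
  have hhalf (a : Bool) : Expands {expandBox i a c} (X.filter (BoxLE (expandBox i a c))) :=
    ih _ (hn ▸ card_filter_expandBox_lt hX hc hi a) (hX.filter_expandBox hc hi a)
      (fun b hb => (Finset.mem_filter.1 hb).2) rfl
  have hsplit : Expands {c} ({expandBox i false c} ∪ {expandBox i true c}) :=
    .single ⟨i, c, Finset.mem_singleton_self c,
      by rw [Finset.erase_singleton, Finset.insert_empty, Finset.insert_eq]⟩
  have h := hsplit.trans ((hhalf false).union (hhalf true)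
    (by simpa using disjoint_boxSet_expandBox i c Bool.false_ne_true))
  rwa [← Finset.filter_or, Finset.filter_true_of_mem fun b hb => ?_] at h
  obtain ⟨a, ha⟩ := exists_boxLE_expandBox (hc b hb) (hi b hb)
  cases a
  exacts [.inl ha, .inr ha]

theorem expands_of_refines {X Z : Finset (Box 2)} {S : Set (Fin 2 → ℕ → Bool)}
    (hX : IsPartition X S) (hZ : IsPartition Z S) (hZX : ∀ z ∈ Z, ∃ x ∈ X, BoxLE x z) :
    Expands X Z := by
  induction X using Finset.induction_on generalizing S Z with
  | empty =>
    obtain rfl : Z = ∅ := Finset.eq_empty_of_forall_notMem fun z hz => by simpa using hZX z hz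
    exact .refl
  | insert x X hxX ih =>
  have hdisj : ∀ z ∈ Z, ¬ BoxLE x z → Disjoint (boxSet z) (boxSet x) := fun z hz h => by
    obtain ⟨x', hx', hx'z⟩ := hZX z hz
    exact hX.disjoint_of_not_boxLE (Finset.mem_insert_self x X) hx' hx'z h
  have hZx : IsPartition (Z.filter (BoxLE x)) (boxSet x) := by
    have h := hZ.filter (BoxLE x) (boxSet x) (fun z _ h => boxSet_anti h) hdisj
    rwa [Set.inter_eq_right.2 (hX.subset (Finset.mem_insert_self x X))] at h
  have hZ' := hZ.filter (¬ BoxLE x ·) (boxSet x)ᶜ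
    (fun z hz h => Set.subset_compl_iff_disjoint_right.2 (hdisj z hz h))
    fun z _ h => disjoint_compl_right.mono_left (boxSet_anti (not_not.1 h))
  have hX' : IsPartition X (S ∩ (boxSet x)ᶜ) := by
    have h := hX.filter (· ≠ x) (boxSet x)ᶜ
      (fun b hb hne => Set.subset_compl_iff_disjoint_right.2
        (hX.pairwiseDisjoint hb (Finset.mem_insert_self x X) hne))
      fun b _ h => by rw [not_not.1 h]; exact disjoint_compl_right
    rwa [Finset.filter_ne', Finset.erase_insert hxX] at h
  have hrest : Expands X (Z.filter (¬ BoxLE x ·)) := ih hX' hZ' fun z hz => by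
    rw [Finset.mem_filter] at hz
    obtain ⟨x', hx', hx'z⟩ := hZX z hz.1
    rcases Finset.mem_insert.1 hx' with rfl | hx'
    exacts [absurd hx'z hz.2, ⟨x', hx', hx'z⟩]
  have h := (expands_singleton_of_isPartition hZx fun z hz => (Finset.mem_filter.1 hz).2).union
    hrest (by
      rw [Finset.set_biUnion_singleton, hX'.biUnion_eq]
      exact disjoint_compl_right.mono_right Set.inter_subset_right)
  rwa [← Finset.insert_eq, Finset.filter_union_filter_not_eq] at h

section MergeablePairs

variable {A A' Y : Finset (Box s)}

def IsMergeablePair (A Y : Finset (Box s)) (z : Box s × Fin s) : Prop :=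
  expandBox z.2 false z.1 ∈ Y ∧ expandBox z.2 true z.1 ∈ Y ∧ ∃ a ∈ A, BoxLE a z.1

def IsDeepestPair (A Y : Finset (Box s)) (z : Box s × Fin s) : Prop :=
  IsMergeablePair A Y z ∧ ∀ z', IsMergeablePair A Y z' → depth z'.1 ≤ depth z.1

lemma IsMergeablePair.expandBox_mem {z : Box s × Fin s} (h : IsMergeablePair A Y z) (a : Bool) :
    expandBox z.2 a z.1 ∈ Y := by
  cases a
  exacts [h.1, h.2.1]

lemma IsMergeablePair.of_expands {z : Box s × Fin s} (h : IsMergeablePair A' Y z)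
    (hAA' : Expands A A') : IsMergeablePair A Y z := by
  obtain ⟨h₀, h₁, a', ha', hle⟩ := h
  obtain ⟨a, ha, haa'⟩ := hAA'.exists_boxLE ha'
  exact ⟨h₀, h₁, a, ha, haa'.trans hle⟩

lemma exists_isDeepestPair (h : Expands A Y) (hne : A ≠ Y) : ∃ z, IsDeepestPair A Y z := by
  obtain ⟨p, i, hp⟩ := h.exists_expandBox_mem hne
  set D : Set ℕ := {d | ∃ z, IsMergeablePair A Y z ∧ depth z.1 = d}
  have hbdd : BddAbove D := by
    refine ⟨Y.sup depth, ?_⟩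
    rintro _ ⟨z, hz, rfl⟩
    exact (depth_le_of_boxLE (boxLE_expandBox z.2 false z.1)).trans (Finset.le_sup hz.1)
  obtain ⟨z, hz, hd⟩ : sSup D ∈ D := Nat.sSup_mem ⟨_, (p, i), hp, rfl⟩ hbdd
  exact ⟨z, hz, fun z' hz' => hd ▸ le_csSup hbdd ⟨z', hz', rfl⟩⟩

end MergeablePairs

def children (i : Fin s) (p : Box s) : Finset (Box s) := {expandBox i false p, expandBox i true p}

lemma mem_children {i : Fin s} {p c : Box s} : c ∈ children i p ↔ ∃ a, c = expandBox i a p := by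
  simp only [children, Finset.mem_insert, Finset.mem_singleton]
  refine ⟨?_, fun ⟨a, ha⟩ => ?_⟩
  · rintro (h | h)
    exacts [⟨_, h⟩, ⟨_, h⟩]
  · cases a
    exacts [.inl ha, .inr ha]

def IsSubboxCover (C : Finset (Box s)) (R : Box s) : Prop :=
  (∀ c ∈ C, BoxLE R c) ∧ boxSet R ⊆ ⋃ c ∈ C, boxSet c

lemma isSubboxCover_children (i : Fin s) (p : Box s) : IsSubboxCover (children i p) p := by
  refine ⟨fun c hc => ?_, ?_⟩
  · obtain ⟨a, rfl⟩ := mem_children.1 hc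
    exact boxLE_expandBox i a p
  · simp [children, ← boxSet_eq_union_expandBox]

lemma IsSubboxCover.biUnion {C : Finset (Box s)} {R : Box s} {D : Box s → Finset (Box s)}
    (hC : IsSubboxCover C R) (hD : ∀ c ∈ C, IsSubboxCover (D c) c) :
    IsSubboxCover (C.biUnion D) R := by
  refine ⟨fun d hd => ?_, ?_⟩
  · obtain ⟨c, hc, hd⟩ := Finset.mem_biUnion.1 hd
    exact (hC.1 c hc).trans ((hD c hc).1 d hd)
  · rw [Finset.set_biUnion_biUnion]
    exact hC.2.trans (Set.biUnion_mono subset_rfl fun c hc => (hD c hc).2)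

lemma IsSubboxCover.mem_of_inter_nonempty {C Y : Finset (Box s)} {R y : Box s}
    {S : Set (Fin s → ℕ → Bool)} (hC : IsSubboxCover C R) (hY : IsPartition Y S) (hCY : C ⊆ Y)
    (hy : y ∈ Y) (hm : (boxSet y ∩ boxSet R).Nonempty) : y ∈ C := by
  obtain ⟨x, hxy, hxR⟩ := hm
  obtain ⟨c, hc, hxc⟩ : ∃ c ∈ C, x ∈ boxSet c := by simpa using hC.2 hxR
  rwa [hY.eq_of_inter_nonempty hy (hCY hc) ⟨x, hxy, hxc⟩]

lemma boxLE_of_siblings_mem {Y : Finset (Box s)} {S : Set (Fin s → ℕ → Bool)}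
    (hY : IsPartition Y S) {w y : Box s}
    (hsib : ∀ j, ∃ t c, w = expandBox j c t ∧ expandBox j (!c) t ∈ Y) (hy : y ∈ Y)
    (hm : (boxSet y ∩ boxSet w).Nonempty) : BoxLE w y := by
  have hcomp := boxSet_inter_nonempty_iff.1 hm
  intro j
  obtain ⟨t, c, hw, ht⟩ := hsib j
  refine (hcomp j).elim (fun h => ?_) id
  rw [hw, expandBox_apply_self, List.prefix_concat_iff] at h
  rcases h with h | hyt
  · rw [hw, expandBox_apply_self, h]
  -- otherwise `y` meets the sibling of `w` in direction `j` without being equal to it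
  have hys : y = expandBox j (!c) t := hY.eq_of_inter_nonempty hy ht <|
    boxSet_inter_nonempty_iff.2 fun k => by
      rcases eq_or_ne k j with rfl | hk
      · rw [expandBox_apply_self]
        exact .inl (hyt.trans (List.prefix_append _ _))
      · rw [expandBox_apply_of_ne hk]
        simpa [hw, expandBox_apply_of_ne hk] using hcomp k
  have := hyt.length_le
  rw [hys, expandBox_apply_self] at this
  simp at this

lemma isPartition_filter_of_siblings_mem {Y : Finset (Box s)} (hY : IsPartition Y Set.univ)
    {w : Box s} (hsib : ∀ j, ∃ t c, w = expandBox j c t ∧ expandBox j (!c) t ∈ Y) :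
    IsPartition (Y.filter (BoxLE w)) (boxSet w) := by
  have h := hY.filter (BoxLE w) (boxSet w) (fun y _ h => boxSet_anti h) fun y hy h =>
    Set.not_nonempty_iff_eq_empty.1 (fun hm => h (boxLE_of_siblings_mem hY hsib hy hm))
      |> Set.disjoint_iff_inter_eq_empty.2
  rwa [Set.univ_inter] at h

lemma exists_boxLE_of_boxLE_expandBox {A : Finset (Box s)} {S : Set (Fin s → ℕ → Bool)}
    (hA : IsPartition A S) {q : Box s} {i i' : Fin s} {a a' : Bool} (hii' : i ≠ i')
    (h : ∃ b ∈ A, BoxLE b (expandBox i' a' q)) (h' : ∃ b ∈ A, BoxLE b (expandBox i a q)) :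
    ∃ b ∈ A, BoxLE b q := by
  obtain ⟨b, hb, hbp⟩ := h
  obtain ⟨b', hb', hbp'⟩ := h'
  obtain rfl : b = b' := hA.eq_of_inter_nonempty hb hb' <|
    boxSet_inter_nonempty_of_boxLE (c := expandBox i a (expandBox i' a' q))
      (hbp.trans (boxLE_expandBox _ _ _))
      (expandBox_comm hii' a a' q ▸ hbp'.trans (boxLE_expandBox _ _ _))
  refine ⟨b, hb, fun j => ?_⟩
  rcases eq_or_ne j i' with rfl | hj
  · simpa [expandBox_apply_of_ne hii'.symm] using hbp' j
  · simpa [expandBox_apply_of_ne hj] using hbp j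

section Quads

lemma fin_two_eq_or_eq {i i' : Fin 2} (h : i ≠ i') (j : Fin 2) : j = i ∨ j = i' := by
  omega

def quadBox (c : Box 2) : Box 2 := fun j => (c j).dropLast

def quadCells (q : Box 2) : Finset (Box 2) := (children 0 q).biUnion (children 1)

variable {i i' : Fin 2} {q : Box 2}

lemma quadBox_expandBox_expandBox (h : i ≠ i') (a a' : Bool) (q : Box 2) :
    quadBox (expandBox i a (expandBox i' a' q)) = q := by
  funext j
  rcases fin_two_eq_or_eq h j with rfl | rfl
  · simp [quadBox, expandBox_apply_self, expandBox_apply_of_ne h]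
  · simp [quadBox, expandBox_apply_self, expandBox_apply_of_ne h.symm]

lemma mem_quadCells (h : i ≠ i') {c : Box 2} :
    c ∈ quadCells q ↔ ∃ a a', c = expandBox i a (expandBox i' a' q) := by
  have key : c ∈ quadCells q ↔ ∃ a a', c = expandBox 1 a (expandBox 0 a' q) := by
    simp only [quadCells, Finset.mem_biUnion, mem_children]
    exact ⟨fun ⟨_, ⟨a', rfl⟩, a, hc⟩ => ⟨a, a', hc⟩, fun ⟨a, a', hc⟩ => ⟨_, ⟨a', rfl⟩, a, hc⟩⟩
  rw [key]
  rcases fin_two_eq_or_eq h 1 with rfl | rfl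
  · obtain rfl : i' = 0 := by omega
    rfl
  · obtain rfl : i = 0 := by omega
    simp only [expandBox_comm (show (1 : Fin 2) ≠ 0 by decide)]
    exact exists_comm

lemma quadBox_of_mem_quadCells {c : Box 2} (hc : c ∈ quadCells q) : quadBox c = q := by
  obtain ⟨a, a', rfl⟩ := (mem_quadCells (show (1 : Fin 2) ≠ 0 by decide)).1 hc
  exact quadBox_expandBox_expandBox (by decide) a a' q

lemma isSubboxCover_quadCells (q : Box 2) : IsSubboxCover (quadCells q) q :=
  (isSubboxCover_children 0 q).biUnion fun c _ => isSubboxCover_children 1 c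

lemma card_quadCells_le (q : Box 2) : (quadCells q).card ≤ 4 :=
  calc (quadCells q).card ≤ ∑ c ∈ children 0 q, (children 1 c).card := Finset.card_biUnion_le
    _ ≤ ∑ _c ∈ children 0 q, 2 := Finset.sum_le_sum fun _ _ => Finset.card_le_two
    _ ≤ 4 := by
      rw [Finset.sum_const, smul_eq_mul]
      have : (children 0 q).card ≤ 2 := Finset.card_le_two
      omega

/-- Two pairs of different colours that share a cell are the halves of a common quad `q` in the
two directions (`crosses_of_expandBox_eq`). -/
def Crosses (z z' : Box 2 × Fin 2) (q : Box 2) : Prop :=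
  z.2 ≠ z'.2 ∧ ∃ a a', z.1 = expandBox z'.2 a' q ∧ z'.1 = expandBox z.2 a q

lemma Crosses.symm {z z' : Box 2 × Fin 2} (h : Crosses z z' q) : Crosses z' z q :=
  let ⟨hne, a, a', hz, hz'⟩ := h
  ⟨hne.symm, a', a, hz', hz⟩

lemma crosses_of_expandBox_eq {p p' : Box 2} {a a' : Bool} (hii' : i ≠ i')
    (h : expandBox i a p = expandBox i' a' p') :
    Crosses (p, i) (p', i') (Function.update p i' (p' i')) := by
  have hi := congrFun h i
  have hi' := congrFun h i'
  rw [expandBox_apply_self, expandBox_apply_of_ne hii'] at hi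
  rw [expandBox_apply_self, expandBox_apply_of_ne hii'.symm] at hi'
  refine ⟨hii', a, a', funext fun j => ?_, funext fun j => ?_⟩ <;>
    rcases fin_two_eq_or_eq hii' j with rfl | rfl <;>
    simp [expandBox_apply_self, expandBox_apply_of_ne, hii', hii'.symm, hi, hi']

lemma crosses_of_mem_quadCells {p p' : Box 2} {a b : Bool} (hii' : i ≠ i')
    (hp' : p' = expandBox i b q) (hc : expandBox i a p ∈ quadCells q) :
    Crosses (p, i) (p', i') q := by
  obtain ⟨u, v, huv⟩ := (mem_quadCells hii').1 hc
  exact ⟨hii', b, v, (expandBox_injective huv).1, hp'⟩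

theorem expandBox_mem_of_crosses {A Y : Finset (Box 2)} (hY : IsPartition Y Set.univ)
    (hA : IsPartition A Set.univ) {p p' : Box 2} {a a' : Bool}
    (hdeep : IsDeepestPair A Y (p, i)) (hm : IsMergeablePair A Y (p', i')) (hii' : i ≠ i')
    (hp : p = expandBox i' a' q) (hp' : p' = expandBox i a q) :
    expandBox i (!a) (expandBox i' (!a') q) ∈ Y := by
  subst hp hp'
  set w := expandBox i (!a) (expandBox i' (!a') q)
  obtain ⟨b, hb, hbq⟩ := exists_boxLE_of_boxLE_expandBox hA hii' hdeep.1.2.2 hm.2.2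
  -- the two siblings of `w` are cells of the two crossing pairs
  have hsib : ∀ j, ∃ t c, w = expandBox j c t ∧ expandBox j (!c) t ∈ Y := by
    intro j
    rcases fin_two_eq_or_eq hii' j with rfl | rfl
    · refine ⟨_, _, rfl, ?_⟩
      rw [Bool.not_not, expandBox_comm hii']
      exact hm.expandBox_mem _
    · refine ⟨_, _, expandBox_comm hii' _ _ _, ?_⟩
      rw [Bool.not_not, ← expandBox_comm hii']
      exact hdeep.1.expandBox_mem _
  -- otherwise the boxes of `Y` inside `w` would contain a mergeable pair deeper than `p`
  by_contra hw
  have hne : {w} ≠ Y.filter (BoxLE w) := fun h =>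
    hw (Finset.mem_filter.1 (h ▸ Finset.mem_singleton_self w)).1
  obtain ⟨p'', j, h₀, h₁, c, hc, hcp⟩ := Expands.exists_expandBox_mem
    (expands_singleton_of_isPartition (isPartition_filter_of_siblings_mem hY hsib)
      fun y hy => (Finset.mem_filter.1 hy).2) hne
  rw [Finset.mem_singleton] at hc
  subst hc
  have hqw : BoxLE q w := (boxLE_expandBox _ _ _).trans (boxLE_expandBox _ _ _)
  have hdepth := hdeep.2 (p'', j)
    ⟨(Finset.mem_filter.1 h₀).1, (Finset.mem_filter.1 h₁).1, b, hb, (hbq.trans hqw).trans hcp⟩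
  have hwp := depth_le_of_boxLE hcp
  simp only [w, depth_expandBox] at hdepth hwp
  omega

end Quads

section PushingMap

def IsProperContraction (Y A : Finset (Box s)) : Prop := Admissible A ∧ Expands A Y ∧ A ≠ Y

variable {Y : Finset (Box 2)} {σ σ' : Finset (Finset (Box 2))} {A B : Finset (Box 2)}

noncomputable def deepestPair (A Y : Finset (Box 2)) : Box 2 × Fin 2 :=
  Classical.epsilon (IsDeepestPair A Y)

lemma isDeepestPair_deepestPair (h : IsProperContraction Y A) :
    IsDeepestPair A Y (deepestPair A Y) :=
  Classical.epsilon_spec (exists_isDeepestPair h.2.1 h.2.2)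

def HasCrossing (Y : Finset (Box 2)) (σ : Finset (Finset (Box 2))) (A : Finset (Box 2)) : Prop :=
  ∃ A' ∈ σ, ∃ q, Crosses (deepestPair A Y) (deepestPair A' Y) q

/-- In the crossing case, `quadBox` of a cell of the pair is the quad spanned by the two crossing
pairs. -/
noncomputable def mergedBox (Y : Finset (Box 2)) (σ : Finset (Finset (Box 2)))
    (A : Finset (Box 2)) : Box 2 :=
  open Classical in
  if HasCrossing Y σ A then quadBox (expandBox (deepestPair A Y).2 false (deepestPair A Y).1)
  else (deepestPair A Y).1

noncomputable def mergedCells (Y : Finset (Box 2)) (σ : Finset (Finset (Box 2)))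
    (A : Finset (Box 2)) : Finset (Box 2) :=
  open Classical in
  if HasCrossing Y σ A then quadCells (mergedBox Y σ A)
  else children (deepestPair A Y).2 (deepestPair A Y).1

noncomputable def pushingMap (Y : Finset (Box 2)) (σ : Finset (Finset (Box 2))) :
    Finset (Box 2) :=
  Y.filter (fun y => ∀ A ∈ σ, ¬ BoxLE (mergedBox Y σ A) y) ∪ σ.image (mergedBox Y σ)

lemma Crosses.mergedBox_eq {q : Box 2} (hA' : A' ∈ σ)
    (h : Crosses (deepestPair A Y) (deepestPair A' Y) q) : mergedBox Y σ A = q := by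
  rw [mergedBox, if_pos ⟨A', hA', q, h⟩]
  obtain ⟨hne, a, a', hp, -⟩ := h
  rw [hp, quadBox_expandBox_expandBox hne]

lemma mergedBox_of_not_hasCrossing (h : ¬ HasCrossing Y σ A) :
    mergedBox Y σ A = (deepestPair A Y).1 :=
  if_neg h

lemma boxLE_mergedBox : BoxLE (mergedBox Y σ A) (deepestPair A Y).1 := by
  by_cases h : HasCrossing Y σ A
  · obtain ⟨A', hA', q, hq⟩ := h
    rw [hq.mergedBox_eq hA']
    obtain ⟨-, a, a', hp, -⟩ := hq
    rw [hp]
    exact boxLE_expandBox _ _ _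
  · rw [mergedBox_of_not_hasCrossing h]
    exact BoxLE.refl _

lemma mergedBox_anti (h : σ' ⊆ σ) : BoxLE (mergedBox Y σ A) (mergedBox Y σ' A) := by
  by_cases h' : HasCrossing Y σ' A
  · obtain ⟨A', hA', q, hq⟩ := h'
    rw [hq.mergedBox_eq hA', hq.mergedBox_eq (h hA')]
    exact BoxLE.refl q
  · rw [mergedBox_of_not_hasCrossing h']
    exact boxLE_mergedBox

lemma isSubboxCover_mergedCells : IsSubboxCover (mergedCells Y σ A) (mergedBox Y σ A) := by
  by_cases h : HasCrossing Y σ A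
  · rw [mergedCells, if_pos h]
    exact isSubboxCover_quadCells _
  · rw [mergedCells, if_neg h, mergedBox_of_not_hasCrossing h]
    exact isSubboxCover_children _ _

lemma card_mergedCells_le (hA : A ∈ σ) :
    (mergedCells Y σ A).card ≤ 2 * (σ.filter (mergedBox Y σ · = mergedBox Y σ A)).card := by
  by_cases h : HasCrossing Y σ A
  · obtain ⟨A', hA', q, hq⟩ := h
    rw [mergedCells, if_pos ⟨A', hA', q, hq⟩]
    have hAA' : A ≠ A' := by
      rintro rfl
      exact hq.1 rfl
    have hsub : {A, A'} ⊆ σ.filter (mergedBox Y σ · = mergedBox Y σ A) := by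
      simp [Finset.insert_subset_iff, hA, hA',
        (hq.symm.mergedBox_eq hA).trans (hq.mergedBox_eq hA').symm]
    calc (quadCells _).card ≤ 2 * ({A, A'} : Finset _).card := by
          rw [Finset.card_pair hAA']
          exact card_quadCells_le _
      _ ≤ _ := Nat.mul_le_mul_left 2 (Finset.card_le_card hsub)
  · rw [mergedCells, if_neg h]
    have : 0 < (σ.filter (mergedBox Y σ · = mergedBox Y σ A)).card :=
      Finset.card_pos.2 ⟨A, Finset.mem_filter.2 ⟨hA, rfl⟩⟩
    have : (children (deepestPair A Y).2 (deepestPair A Y).1).card ≤ 2 := Finset.card_le_two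
    omega

lemma hasCrossing_of_mem_quadCells (hBσ : B ∈ σ) (hB : HasCrossing Y σ B) {c : Box 2}
    (hcA : c ∈ children (deepestPair A Y).2 (deepestPair A Y).1)
    (hcB : c ∈ quadCells (mergedBox Y σ B)) : HasCrossing Y σ A := by
  obtain ⟨B', hB', q, hq⟩ := hB
  rw [hq.mergedBox_eq hB'] at hcB
  obtain ⟨a, rfl⟩ := mem_children.1 hcA
  obtain ⟨hne, b, b', hp, hp'⟩ := hq
  -- the pair of `A` is a half of `q`, so it crosses whichever of the two pairs spanning `q`
  -- has the other colour
  by_cases hcol : (deepestPair A Y).2 = (deepestPair B Y).2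
  · refine ⟨B', hB', q, crosses_of_mem_quadCells (hcol ▸ hne) (hcol ▸ hp') hcB⟩
  · obtain hcol' : (deepestPair A Y).2 = (deepestPair B' Y).2 := by omega
    exact ⟨B, hBσ, q, crosses_of_mem_quadCells hcol (hcol' ▸ hp) hcB⟩

lemma mergedBox_eq_of_mem_mergedCells (hA : A ∈ σ) (hB : B ∈ σ) {c : Box 2}
    (hcA : c ∈ mergedCells Y σ A) (hcB : c ∈ mergedCells Y σ B) :
    mergedBox Y σ A = mergedBox Y σ B := by
  by_cases hA' : HasCrossing Y σ A <;> by_cases hB' : HasCrossing Y σ B <;>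
    simp only [mergedCells, hA', hB', if_true, if_false] at hcA hcB
  · rw [← quadBox_of_mem_quadCells hcA, quadBox_of_mem_quadCells hcB]
  · exact absurd (hasCrossing_of_mem_quadCells hA hA' hcB hcA) hB'
  · exact absurd (hasCrossing_of_mem_quadCells hB hB' hcA hcB) hA'
  rw [mergedBox_of_not_hasCrossing hA', mergedBox_of_not_hasCrossing hB']
  obtain ⟨a, rfl⟩ := mem_children.1 hcA
  obtain ⟨b, hab⟩ := mem_children.1 hcB
  by_cases hcol : (deepestPair A Y).2 = (deepestPair B Y).2
  · rw [hcol] at hab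
    exact (expandBox_injective hab).1
  · exact absurd ⟨B, hB, _, crosses_of_expandBox_eq hcol hab⟩ hA'

lemma exists_boxLE_mergedBox {A₀ : Finset (Box 2)} (hA₀ : Admissible A₀)
    (hmin : ∀ B ∈ σ, Expands A₀ B) (hσ : ∀ A ∈ σ, IsProperContraction Y A) (hA : A ∈ σ) :
    ∃ a ∈ A₀, BoxLE a (mergedBox Y σ A) := by
  have hm (B) (hB : B ∈ σ) : IsMergeablePair A₀ Y (deepestPair B Y) :=
    (isDeepestPair_deepestPair (hσ B hB)).1.of_expands (hmin B hB)
  by_cases h : HasCrossing Y σ A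
  · obtain ⟨A', hA', q, hq⟩ := h
    rw [hq.mergedBox_eq hA']
    obtain ⟨hii', a, a', hp, hp'⟩ := hq
    exact exists_boxLE_of_boxLE_expandBox hA₀.isPartition hii' (hp ▸ (hm A hA).2.2)
      (hp' ▸ (hm A' hA').2.2)
  · rw [mergedBox_of_not_hasCrossing h]
    exact (hm A hA).2.2

lemma exists_mem_pushingMap_boxLE (σ : Finset (Finset (Box 2))) {y : Box 2} (hy : y ∈ Y) :
    ∃ m ∈ pushingMap Y σ, BoxLE m y := by
  by_cases h : ∀ A ∈ σ, ¬ BoxLE (mergedBox Y σ A) y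
  · exact ⟨y, Finset.mem_union_left _ (Finset.mem_filter.2 ⟨hy, h⟩), BoxLE.refl y⟩
  · push Not at h
    obtain ⟨A, hA, hle⟩ := h
    exact ⟨_, Finset.mem_union_right _ (Finset.mem_image_of_mem _ hA), hle⟩

lemma mergedBox_mem_pushingMap (hA : A ∈ σ) : mergedBox Y σ A ∈ pushingMap Y σ :=
  Finset.mem_union_right _ (Finset.mem_image_of_mem _ hA)

lemma mergedBox_notMem (hY : Admissible Y) (hA : IsProperContraction Y A) :
    mergedBox Y σ A ∉ Y := by
  intro hmem
  have hc := (isDeepestPair_deepestPair hA).1.1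
  have hRc : BoxLE (mergedBox Y σ A) (expandBox (deepestPair A Y).2 false (deepestPair A Y).1) :=
    boxLE_mergedBox.trans (boxLE_expandBox _ _ _)
  have heq := hY.isPartition.eq_of_inter_nonempty hmem hc
    (boxSet_inter_nonempty_of_boxLE hRc (BoxLE.refl _))
  have := depth_le_of_boxLE (heq ▸ boxLE_mergedBox : BoxLE _ (deepestPair A Y).1)
  rw [depth_expandBox] at this
  omega

lemma pushingMap_ne (hY : Admissible Y) (hσ : ∀ A ∈ σ, IsProperContraction Y A)
    (hne : σ.Nonempty) : pushingMap Y σ ≠ Y := fun h => by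
  obtain ⟨A, hA⟩ := hne
  exact mergedBox_notMem hY (hσ A hA) (h ▸ mergedBox_mem_pushingMap hA)

variable (hY : Admissible Y) (hσ : ∀ A ∈ σ, IsProperContraction Y A)
  (hchain : IsChain Expands (σ : Set (Finset (Box 2))))
include hY hσ hchain

lemma mergedCells_subset (hA : A ∈ σ) : mergedCells Y σ A ⊆ Y := by
  have hdeep (B) (hB : B ∈ σ) := isDeepestPair_deepestPair (hσ B hB)
  by_cases h : HasCrossing Y σ A
  swap
  · rw [mergedCells, if_neg h]
    intro c hc
    obtain ⟨a, rfl⟩ := mem_children.1 hc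
    exact (hdeep A hA).1.expandBox_mem a
  obtain ⟨A', hA', q, hq⟩ := h
  rw [mergedCells, if_pos ⟨A', hA', q, hq⟩, hq.mergedBox_eq hA']
  obtain ⟨hii', a, a', hp, hp'⟩ := hq
  have hAA' : A ≠ A' := by
    rintro rfl
    exact hii' rfl
  intro c hc
  obtain ⟨u, v, rfl⟩ := (mem_quadCells hii').1 hc
  by_cases hv : v = a'
  · rw [hv, ← hp]
    exact (hdeep A hA).1.expandBox_mem u
  by_cases hu : u = a
  · rw [hu, expandBox_comm hii', ← hp']
    exact (hdeep A' hA').1.expandBox_mem v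
  rw [Bool.eq_not.2 hu, Bool.eq_not.2 hv]
  rcases hchain hA hA' hAA' with hle | hle
  · exact expandBox_mem_of_crosses hY.isPartition (hσ A hA).1.isPartition (hdeep A hA)
      ((hdeep A' hA').1.of_expands hle) hii' hp hp'
  · rw [expandBox_comm hii']
    exact expandBox_mem_of_crosses hY.isPartition (hσ A' hA').1.isPartition (hdeep A' hA')
      ((hdeep A hA).1.of_expands hle) hii'.symm hp' hp

lemma boxLE_mergedBox_of_inter_nonempty (hA : A ∈ σ) {y : Box 2} (hy : y ∈ Y)
    (hm : (boxSet y ∩ boxSet (mergedBox Y σ A)).Nonempty) : BoxLE (mergedBox Y σ A) y :=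
  isSubboxCover_mergedCells.1 y <|
    isSubboxCover_mergedCells.mem_of_inter_nonempty hY.isPartition
      (mergedCells_subset hY hσ hchain hA) hy hm

lemma mergedBox_eq_of_inter_nonempty (hA : A ∈ σ) (hB : B ∈ σ)
    (hm : (boxSet (mergedBox Y σ A) ∩ boxSet (mergedBox Y σ B)).Nonempty) :
    mergedBox Y σ A = mergedBox Y σ B := by
  obtain ⟨x, hxA, hxB⟩ := hm
  obtain ⟨c, hcA, hxc⟩ : ∃ c ∈ mergedCells Y σ A, x ∈ boxSet c := by
    simpa using isSubboxCover_mergedCells.2 hxA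
  have hcB := isSubboxCover_mergedCells.mem_of_inter_nonempty hY.isPartition
    (mergedCells_subset hY hσ hchain hB) (mergedCells_subset hY hσ hchain hA hcA) ⟨x, hxc, hxB⟩
  exact mergedBox_eq_of_mem_mergedCells hA hB hcA hcB

lemma isPartition_pushingMap : IsPartition (pushingMap Y σ) Set.univ := by
  refine ⟨Set.eq_univ_of_forall fun x => ?_, fun b hb c hc hne => ?_⟩
  · obtain ⟨y, hy, hxy⟩ := hY.isPartition.exists_mem (Set.mem_univ x)
    obtain ⟨m, hm, hmy⟩ := exists_mem_pushingMap_boxLE σ hy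
    exact Set.mem_biUnion (Finset.mem_coe.2 hm) (boxSet_anti hmy hxy)
  refine Set.disjoint_iff_inter_eq_empty.2 (Set.not_nonempty_iff_eq_empty.1 fun hbc => hne ?_)
  simp only [Finset.mem_coe, pushingMap, Finset.mem_union, Finset.mem_filter,
    Finset.mem_image] at hb hc
  rcases hb with ⟨hbY, hb⟩ | ⟨A, hA, rfl⟩ <;> rcases hc with ⟨hcY, hc⟩ | ⟨B, hB, rfl⟩
  · exact hY.isPartition.eq_of_inter_nonempty hbY hcY hbc
  · exact absurd (boxLE_mergedBox_of_inter_nonempty hY hσ hchain hB hbY hbc) (hb B hB)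
  · exact absurd (boxLE_mergedBox_of_inter_nonempty hY hσ hchain hA hcY
      (Set.inter_comm _ _ ▸ hbc)) (hc A hA)
  · exact mergedBox_eq_of_inter_nonempty hY hσ hchain hA hB hbc

lemma admissible_pushingMap : Admissible (pushingMap Y σ) :=
  expands_of_refines isPartition_trivialPartition (isPartition_pushingMap hY hσ hchain)
    fun _ _ => ⟨fun _ => [], Finset.mem_singleton_self _, fun _ => List.nil_prefix⟩

lemma pushingMap_expands : Expands (pushingMap Y σ) Y :=
  expands_of_refines (isPartition_pushingMap hY hσ hchain) hY.isPartition
    fun _ => exists_mem_pushingMap_boxLE σ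

lemma expands_pushingMap {A₀ : Finset (Box 2)} (hA₀ : A₀ ∈ σ) (hmin : ∀ B ∈ σ, Expands A₀ B) :
    Expands A₀ (pushingMap Y σ) := by
  refine expands_of_refines (hσ A₀ hA₀).1.isPartition (isPartition_pushingMap hY hσ hchain)
    fun m hm => ?_
  rcases Finset.mem_union.1 hm with hm | hm
  · exact (hσ A₀ hA₀).2.1.exists_boxLE (Finset.mem_filter.1 hm).1
  · obtain ⟨A, hA, rfl⟩ := Finset.mem_image.1 hm
    exact exists_boxLE_mergedBox (hσ A₀ hA₀).1 hmin hσ hA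

lemma pushingMap_anti (h : σ' ⊆ σ) : Expands (pushingMap Y σ) (pushingMap Y σ') := by
  refine expands_of_refines (isPartition_pushingMap hY hσ hchain)
    (isPartition_pushingMap hY (fun A hA => hσ A (h hA)) (hchain.mono (Finset.coe_subset.2 h)))
    fun m hm => ?_
  rcases Finset.mem_union.1 hm with hm | hm
  · exact exists_mem_pushingMap_boxLE σ (Finset.mem_filter.1 hm).1
  · obtain ⟨A, hA, rfl⟩ := Finset.mem_image.1 hm
    exact ⟨_, mergedBox_mem_pushingMap (h hA), mergedBox_anti h⟩

/-- A quad carries four boxes of `Y` but is the merged box of at least two elements of `σ`. -/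
lemma card_sdiff_pushingMap_le : (Y \ pushingMap Y σ).card ≤ 2 * σ.card := by
  have hsub : Y \ pushingMap Y σ ⊆
      (σ.image (mergedBox Y σ)).biUnion fun R => Y.filter (BoxLE R) := by
    intro y hy
    obtain ⟨hyY, hyM⟩ := Finset.mem_sdiff.1 hy
    have : ¬ ∀ A ∈ σ, ¬ BoxLE (mergedBox Y σ A) y := fun h =>
      hyM (Finset.mem_union_left _ (Finset.mem_filter.2 ⟨hyY, h⟩))
    push Not at this
    obtain ⟨A, hA, hle⟩ := this
    exact Finset.mem_biUnion.2 ⟨_, Finset.mem_image_of_mem _ hA, Finset.mem_filter.2 ⟨hyY, hle⟩⟩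
  have hfiber : ∀ R ∈ σ.image (mergedBox Y σ),
      (Y.filter (BoxLE R)).card ≤ 2 * (σ.filter (mergedBox Y σ · = R)).card := by
    intro R hR
    obtain ⟨A, hA, rfl⟩ := Finset.mem_image.1 hR
    refine le_trans (Finset.card_le_card fun y hy => ?_) (card_mergedCells_le hA)
    obtain ⟨hyY, hle⟩ := Finset.mem_filter.1 hy
    exact isSubboxCover_mergedCells.mem_of_inter_nonempty hY.isPartition
      (mergedCells_subset hY hσ hchain hA) hyY
      (boxSet_inter_nonempty_of_boxLE (BoxLE.refl y) hle)
  calc (Y \ pushingMap Y σ).card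
      ≤ ∑ R ∈ σ.image (mergedBox Y σ), (Y.filter (BoxLE R)).card :=
        (Finset.card_le_card hsub).trans Finset.card_biUnion_le
    _ ≤ ∑ R ∈ σ.image (mergedBox Y σ), 2 * (σ.filter (mergedBox Y σ · = R)).card :=
        Finset.sum_le_sum hfiber
    _ = 2 * σ.card := by
        rw [← Finset.mul_sum, ← Finset.card_eq_sum_card_fiberwise fun A hA =>
          Finset.mem_coe.2 (Finset.mem_image_of_mem _ hA)]

end PushingMap

/-- `s = 2`: the pushing map. There is an order-reversing map `M` from nonempty
finite chains in `K_Y` to `K_Y` with `A_t ≤ M(σ)` for the least vertex `A_t` of a chain `σ`,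
such that `M(σ)` involves at most `2` elements of `Y` for a vertex and at most `4t` elements
for a `t`-simplex (`t ≥ 1`). -/
theorem exists_pushing_map_2V (Y : Finset (Box 2)) (hY : Admissible Y) :
    ∃ M : Finset (Finset (Box 2)) → Finset (Box 2),
      (∀ σ : Finset (Finset (Box 2)), σ.Nonempty →
        (∀ A ∈ σ, Admissible A ∧ Expands A Y ∧ A ≠ Y) →
        IsChain (fun A B => Expands A B) (↑σ : Set (Finset (Box 2))) →
          ((Admissible (M σ) ∧ Expands (M σ) Y ∧ M σ ≠ Y) ∧
           (∀ A ∈ σ, (∀ B ∈ σ, Expands A B) → Expands A (M σ)) ∧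
           (σ.card = 1 → (Y \ M σ).card ≤ 2) ∧
           (2 ≤ σ.card → (Y \ M σ).card ≤ 4 * (σ.card - 1)))) ∧
      (∀ σ σ' : Finset (Finset (Box 2)), σ'.Nonempty → σ' ⊆ σ →
        (∀ A ∈ σ, Admissible A ∧ Expands A Y ∧ A ≠ Y) →
        IsChain (fun A B => Expands A B) (↑σ : Set (Finset (Box 2))) →
          Expands (M σ) (M σ')) := by
  refine ⟨pushingMap Y, fun σ hne hσ hchain => ?_, fun σ σ' _ hsub hσ hchain =>
    pushingMap_anti hY hσ hchain hsub⟩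
  have hcard := card_sdiff_pushingMap_le hY hσ hchain
  exact ⟨⟨admissible_pushingMap hY hσ hchain, pushingMap_expands hY hσ hchain,
    pushingMap_ne hY hσ hne⟩, fun A hA hmin => expands_pushingMap hY hσ hchain hA hmin,
    fun h => by omega, fun h => by omega⟩

end BrinThompson
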